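/- arXiv:2405.11198 — 5 statements merged into one kernel-verified Lean document; each statement's English description precedes it below -/
import Mathlib

section
/- Let c be a real number with c < 0, and let z_ε, z_π be real numbers with 0 < z_ε ≤ z_π. Then 0 < c/(c−1) ≤ 1 − (z_ε/(1−c))/z_π. -/
/-- Arithmetic core of the bound of the adaptive penalty by the Lagrangian gap:
`c` is a negative minimum reduced cost, `zε` the dual objective value of the
stabilized solution, `zπ` the optimal objective value of the restricted dual
problem, `c/(c-1)` the adaptive penalty, `zε/(1-c)` the Lagrangian bound, and
`1 - (zε/(1-c))/zπ` the Lagrangian gap. -/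
theorem penalty_gap_arith (c zε zπ : ℝ) (hc : c < 0) (hzε : 0 < zε) (hle : zε ≤ zπ) :
    0 < c / (c - 1) ∧ c / (c - 1) ≤ 1 - (zε / (1 - c)) / zπ := by
  have hzπ : 0 < zπ := lt_of_lt_of_le hzε hle
  have h1c : 0 < 1 - c := by linarith
  constructor
  · exact div_pos_of_neg_of_neg hc (by linarith)
  · have h1 : zε / zπ ≤ 1 := (div_le_one hzπ).mpr hle
    have key : (zε / (1 - c)) / zπ ≤ 1 / (1 - c) := by
      rw [div_div, div_le_div_iff₀ (by positivity) h1c]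
      nlinarith
    have heq : 1 - 1 / (1 - c) = c / (c - 1) := by
      have hne : c - 1 ≠ 0 := by linarith
      field_simp
      ring
    linarith [key, heq.le, heq.ge]
end

section
/- Let S' be a set of maximal independent sets of G. Suppose π is optimal for the restricted dual problem over S', i.e., π is RDP-feasible over S' and z(π) ≥ z(σ) for every σ that is RDP-feasible over S'. Suppose π^ε is RDP-feasible over S' and z(π^ε) > 0. Let c = c*(π^ε) be the minimum reduced cost with respect to π^ε, let ε = ε(c), let L(π^ε) = z(π^ε)/(1 − c), and let l = 1 − L(π^ε)/z(π). Then 0 ≤ ε ≤ l. -/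
variable {V : Type*}

/-- An independent set of a simple graph: pairwise non-adjacent vertices. -/
def IsIndepSet' (G : SimpleGraph V) (s : Finset V) : Prop :=
  ∀ ⦃i⦄, i ∈ s → ∀ ⦃j⦄, j ∈ s → ¬ G.Adj i j

/-- A maximal independent set: an independent set not properly contained in any
other independent set. -/
def IsMIS (G : SimpleGraph V) (s : Finset V) : Prop :=
  IsIndepSet' G s ∧ ∀ t : Finset V, IsIndepSet' G t → s ⊆ t → s = t

/-- `π` is feasible for the restricted dual problem over the column set `S'`. -/
def RDPFeasible (S' : Set (Finset V)) (π : V → ℝ) : Prop :=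
  (∀ i, 0 ≤ π i ∧ π i ≤ 1) ∧ ∀ s ∈ S', ∑ i ∈ s, π i ≤ 1

/-- The adaptive penalty function `ε(c) = c/(c-1)` if `c < 0`, else `0`. -/
noncomputable def eps (c : ℝ) : ℝ := if c < 0 then c / (c - 1) else 0

lemma exists_MIS_mem [Fintype V] (G : SimpleGraph V) (i : V) :
    ∃ s : Finset V, IsMIS G s ∧ i ∈ s := by
  classical
  set T : Finset (Finset V) := Finset.univ.filter (fun t => IsIndepSet' G t ∧ i ∈ t) with hT
  have hmem : ({i} : Finset V) ∈ T := by
    refine Finset.mem_filter.2 ⟨Finset.mem_univ _, ?_, Finset.mem_singleton_self i⟩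
    intro a ha b hb
    rw [Finset.mem_singleton] at ha hb
    subst ha; subst hb
    exact G.loopless.irrefl _
  obtain ⟨s, hsT, hmax⟩ := T.exists_max_image Finset.card ⟨_, hmem⟩
  simp only [hT, Finset.mem_filter, Finset.mem_univ, true_and] at hsT
  refine ⟨s, ⟨hsT.1, fun t ht hst => ?_⟩, hsT.2⟩
  have htT : t ∈ T := by
    simp only [hT, Finset.mem_filter, Finset.mem_univ, true_and]
    exact ⟨ht, hst hsT.2⟩
  exact Finset.eq_of_subset_of_card_le hst (hmax t htT)

/-- Theorem: the adaptive penalty is nonnegative and bounded above by the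
Lagrangian gap `l = 1 - L(πε)/z(π)`, where `L(πε) = z(πε)/(1 - c)` and `c` is
the minimum reduced cost with respect to `πε`. -/
theorem penalty_bounded_by_lagrangian_gap [Fintype V]
    (G : SimpleGraph V) (S' : Set (Finset V))
    (hS' : ∀ s ∈ S', IsMIS G s)
    (π πε : V → ℝ)
    (hπfeas : RDPFeasible S' π)
    (hπopt : ∀ σ : V → ℝ, RDPFeasible S' σ → ∑ i, σ i ≤ ∑ i, π i)
    (hπεfeas : RDPFeasible S' πε)
    (hzpos : 0 < ∑ i, πε i)
    (c : ℝ)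
    (hc_lb : ∀ s : Finset V, IsMIS G s → c ≤ 1 - ∑ i ∈ s, πε i)
    (hc_attained : ∃ s : Finset V, IsMIS G s ∧ c = 1 - ∑ i ∈ s, πε i) :
    0 ≤ eps c ∧ eps c ≤ 1 - ((∑ i, πε i) / (1 - c)) / (∑ i, π i) := by
  have hzπ : 0 < ∑ i, π i := lt_of_lt_of_le hzpos (hπopt πε hπεfeas)
  -- each πε i ≤ 1 - c
  have hub : ∀ i, πε i ≤ 1 - c := by
    intro i
    obtain ⟨s, hs, his⟩ := exists_MIS_mem G i
    have h1 := hc_lb s hs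
    have h2 : πε i ≤ ∑ j ∈ s, πε j :=
      Finset.single_le_sum (fun j _ => (hπεfeas.1 j).1) his
    linarith
  -- c < 1
  have hc1 : c < 1 := by
    obtain ⟨i, hi⟩ : ∃ i, 0 < πε i := by
      by_contra h
      push_neg at h
      have : ∑ i, πε i ≤ 0 := Finset.sum_nonpos (fun i _ => h i)
      linarith
    have := hub i
    linarith
  have h1c : 0 < 1 - c := by linarith
  -- scaled πε is feasible
  have hσ : RDPFeasible S' (fun i => πε i / (1 - c)) := by
    constructor
    · intro i
      constructor
      · exact div_nonneg (hπεfeas.1 i).1 h1c.le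
      · rw [div_le_one h1c]; exact hub i
    · intro s hsS
      rw [← Finset.sum_div, div_le_one h1c]
      have := hc_lb s (hS' s hsS)
      linarith
  have hL : (∑ i, πε i) / (1 - c) ≤ ∑ i, π i := by
    have := hπopt _ hσ
    rwa [← Finset.sum_div] at this
  have hX : ((∑ i, πε i) / (1 - c)) / (∑ i, π i) ≤ 1 :=
    (div_le_one hzπ).2 hL
  by_cases hc : c < 0
  · have hε : eps c = c / (c - 1) := if_pos hc
    have hc1' : c - 1 < 0 := by linarith
    constructor
    · rw [hε]
      exact div_nonneg_iff.2 (Or.inr ⟨hc.le, hc1'.le⟩)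
    · rw [hε]
      have hzle : ∑ i, πε i ≤ ∑ i, π i := hπopt πε hπεfeas
      have hX2 : ((∑ i, πε i) / (1 - c)) / (∑ i, π i) ≤ 1 / (1 - c) := by
        rw [div_div, div_le_div_iff₀ (by positivity) h1c]
        nlinarith
      have hne : c - 1 ≠ 0 := by linarith
      have hne2 : (1 : ℝ) - c ≠ 0 := by linarith
      have key : c / (c - 1) = 1 - 1 / (1 - c) := by
        field_simp
        ring
      rw [key]
      linarith
  · rw [eps, if_neg hc]
    exact ⟨le_refl 0, by linarith⟩
end

section
/- Let S' be a set of maximal independent sets of G. Suppose π is optimal for the restricted dual problem over S', i.e., π is RDP-feasible over S' and z(π) ≥ z(σ) for every σ that is RDP-feasible over S'. Suppose π^ε is RDP-feasible over S' and z(π^ε) > 0. Let c = c*(π^ε) be the minimum reduced cost with respect to π^ε and let l = 1 − (z(π^ε)/(1 − c))/z(π) be the Lagrangian gap. Then for every maximal independent set s of G, setting c‡ = 1 − ∑_{i∈s} π^ε_i (the reduced cost of the heuristically found column s), one has 0 ≤ ε(c‡) ≤ l. -/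
variable {V : Type*}

/-- For every maximal independent set `s` (a heuristically found column), the
penalty computed from its reduced cost `c‡ = 1 - ∑_{i∈s} πε_i` satisfies
`0 ≤ ε(c‡) ≤ l`, where `l` is the Lagrangian gap. -/
theorem heuristic_penalty_bounded_by_lagrangian_gap [Fintype V]
    (G : SimpleGraph V) (S' : Set (Finset V))
    (hS' : ∀ s ∈ S', IsMIS G s)
    (π πε : V → ℝ)
    (hπfeas : RDPFeasible S' π)
    (hπopt : ∀ σ : V → ℝ, RDPFeasible S' σ → ∑ i, σ i ≤ ∑ i, π i)
    (hπεfeas : RDPFeasible S' πε)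
    (hzpos : 0 < ∑ i, πε i)
    (c : ℝ)
    (hc_lb : ∀ s : Finset V, IsMIS G s → c ≤ 1 - ∑ i ∈ s, πε i)
    (hc_attained : ∃ s : Finset V, IsMIS G s ∧ c = 1 - ∑ i ∈ s, πε i) :
    ∀ s : Finset V, IsMIS G s →
      0 ≤ eps (1 - ∑ i ∈ s, πε i) ∧
      eps (1 - ∑ i ∈ s, πε i) ≤ 1 - ((∑ i, πε i) / (1 - c)) / (∑ i, π i) := by
  classical
  set z := ∑ i, πε i with hz
  set Z := ∑ i, π i with hZdef
  have hzZ : z ≤ Z := hπopt πε hπεfeas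
  have hZpos : 0 < Z := lt_of_lt_of_le hzpos hzZ
  -- every vertex lies in some MIS
  have hmem : ∀ i : V, ∃ s : Finset V, IsMIS G s ∧ i ∈ s := by
    intro i
    have hF : ({i} : Finset V) ∈ Finset.univ.filter
        (fun t : Finset V => IsIndepSet' G t ∧ i ∈ t) := by
      simp only [Finset.mem_filter, Finset.mem_univ, true_and]
      refine ⟨?_, Finset.mem_singleton_self i⟩
      intro a ha b hb
      simp only [Finset.mem_singleton] at ha hb
      rw [ha, hb]; exact G.irrefl
    obtain ⟨t, htF, htmax⟩ := Finset.exists_max_image _ (fun t : Finset V => t.card)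
      ⟨_, hF⟩
    simp only [Finset.mem_filter, Finset.mem_univ, true_and] at htF
    refine ⟨t, ⟨htF.1, ?_⟩, htF.2⟩
    intro t' ht' hsub
    have ht'F : t' ∈ Finset.univ.filter
        (fun t : Finset V => IsIndepSet' G t ∧ i ∈ t) := by
      simp only [Finset.mem_filter, Finset.mem_univ, true_and]
      exact ⟨ht', hsub htF.2⟩
    exact Finset.eq_of_subset_of_card_le hsub (htmax _ ht'F)
  -- per-vertex bound: πε i ≤ 1 - c
  have hvert : ∀ i : V, πε i ≤ 1 - c := by
    intro i
    obtain ⟨s, hs, his⟩ := hmem i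
    have h1 : c ≤ 1 - ∑ j ∈ s, πε j := hc_lb s hs
    have h2 : πε i ≤ ∑ j ∈ s, πε j :=
      Finset.single_le_sum (fun j _ => (hπεfeas.1 j).1) his
    linarith
  have hc1 : c ≤ 1 := by
    obtain ⟨s, hs, hceq⟩ := hc_attained
    have : 0 ≤ ∑ i ∈ s, πε i := Finset.sum_nonneg fun i _ => (hπεfeas.1 i).1
    linarith
  -- key: z / (1 - c) ≤ Z
  have hA : z / (1 - c) ≤ Z := by
    rcases eq_or_lt_of_le hc1 with hceq | hclt
    · rw [← hceq]; simp; exact le_of_lt hZpos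
    · have hpos : 0 < 1 - c := by linarith
      have hfeas : RDPFeasible S' (fun i => πε i / (1 - c)) := by
        constructor
        · intro i
          exact ⟨div_nonneg (hπεfeas.1 i).1 hpos.le,
            (div_le_one hpos).mpr (hvert i)⟩
        · intro s hsS'
          rw [← Finset.sum_div]
          rw [div_le_one hpos]
          have := hc_lb s (hS' s hsS')
          linarith
      have := hπopt _ hfeas
      rwa [← Finset.sum_div] at this
  intro s hs
  set d := 1 - ∑ i ∈ s, πε i with hd
  have hcd : c ≤ d := hc_lb s hs
  constructor
  · unfold eps
    split_ifs with h
    · rw [div_nonneg_iff]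
      right
      exact ⟨h.le, by linarith⟩
    · exact le_refl 0
  · unfold eps
    split_ifs with h
    · -- d < 0, hence c < 0
      have hcneg : c < 0 := lt_of_le_of_lt hcd h
      have h1c : (0:ℝ) < 1 - c := by linarith
      have h1d : (0:ℝ) < 1 - d := by linarith
      -- eps d ≤ eps c
      have step1 : d / (d - 1) ≤ c / (c - 1) := by
        have hne1 : d - 1 ≠ 0 := by linarith
        have hne1' : (1:ℝ) - d ≠ 0 := by linarith
        have hne2 : c - 1 ≠ 0 := by linarith
        have hne2' : (1:ℝ) - c ≠ 0 := by linarith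
        have e1 : d / (d - 1) = 1 - 1 / (1 - d) := by field_simp; ring
        have e2 : c / (c - 1) = 1 - 1 / (1 - c) := by field_simp; ring
        have := one_div_le_one_div_of_le h1d (by linarith : 1 - d ≤ 1 - c)
        rw [e1, e2]; linarith
      have step2 : c / (c - 1) ≤ 1 - z / (1 - c) / Z := by
        have heq : c / (c - 1) = 1 - 1 / (1 - c) := by
          have hne2 : c - 1 ≠ 0 := by linarith
          have hne2' : (1:ℝ) - c ≠ 0 := by linarith
          field_simp; ring
        rw [heq]
        have : z / (1 - c) / Z ≤ 1 / (1 - c) := by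
          rw [div_div, div_le_div_iff₀ (by positivity) h1c]
          nlinarith
        linarith
      linarith
    · -- d ≥ 0 : eps d = 0, need (z/(1-c))/Z ≤ 1
      have : z / (1 - c) / Z ≤ 1 := (div_le_one hZpos).mpr hA
      linarith
end

section
/- Let π : V → ℝ satisfy π_i ≥ 0 for every vertex i and z(π) > 0, and let c = c*(π) be the minimum reduced cost with respect to π. Then c < 1 and the scaled vector π/(1−c) is dual-feasible: 0 ≤ π_i/(1−c) ≤ 1 for every vertex i and ∑_{i∈s} π_i/(1−c) ≤ 1 for every maximal independent set s of G. -/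
variable {V : Type*}

/-- `π` is feasible for the (full) dual problem. -/
def DualFeasible (G : SimpleGraph V) (π : V → ℝ) : Prop :=
  (∀ i, 0 ≤ π i ∧ π i ≤ 1) ∧ ∀ s : Finset V, IsMIS G s → ∑ i ∈ s, π i ≤ 1

open Classical in
/-- Every vertex lies in some maximal independent set. -/
lemma exists_mis_mem [Fintype V] (G : SimpleGraph V) (j : V) :
    ∃ s : Finset V, IsMIS G s ∧ j ∈ s := by
  classical
  let S : Finset (Finset V) :=
    Finset.univ.filter (fun t => IsIndepSet' G t ∧ j ∈ t)
  have hne : S.Nonempty := by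
    refine ⟨{j}, ?_⟩
    simp only [S, Finset.mem_filter, Finset.mem_univ, true_and]
    refine ⟨?_, Finset.mem_singleton_self j⟩
    intro a ha b hb
    rw [Finset.mem_singleton] at ha hb
    subst ha; subst hb; exact G.irrefl
  obtain ⟨t, htS, htmax⟩ := S.exists_max_image Finset.card hne
  simp only [S, Finset.mem_filter, Finset.mem_univ, true_and] at htS
  refine ⟨t, ⟨htS.1, ?_⟩, htS.2⟩
  intro u hu hsub
  have huS : u ∈ S := by
    simp only [S, Finset.mem_filter, Finset.mem_univ, true_and]
    exact ⟨hu, hsub htS.2⟩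
  exact Finset.eq_of_subset_of_card_le hsub (htmax u huS)

/-- If `π ≥ 0` has positive dual objective and `c` is the minimum reduced cost
with respect to `π`, then `c < 1` and the scaled vector `π/(1-c)` is
dual-feasible. -/

theorem scaled_duals_feasible [Fintype V]
    (G : SimpleGraph V) (π : V → ℝ)
    (hnn : ∀ i, 0 ≤ π i)
    (hzpos : 0 < ∑ i, π i)
    (c : ℝ)
    (hc_lb : ∀ s : Finset V, IsMIS G s → c ≤ 1 - ∑ i ∈ s, π i)
    (hc_attained : ∃ s : Finset V, IsMIS G s ∧ c = 1 - ∑ i ∈ s, π i) :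
    c < 1 ∧ DualFeasible G (fun i => π i / (1 - c)) := by
  classical
  -- c < 1
  have hc1 : c < 1 := by
    obtain ⟨j, hj⟩ : ∃ j, 0 < π j := by
      by_contra h
      push_neg at h
      have : ∑ i, π i ≤ 0 := Finset.sum_nonpos (fun i _ => h i)
      linarith
    obtain ⟨s, hs, hjs⟩ := exists_mis_mem G j
    have hle : π j ≤ ∑ i ∈ s, π i :=
      Finset.single_le_sum (fun i _ => hnn i) hjs
    have := hc_lb s hs
    linarith
  have hpos : 0 < 1 - c := by linarith
  refine ⟨hc1, ?_, ?_⟩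
  · intro i
    constructor
    · exact div_nonneg (hnn i) hpos.le
    · rw [div_le_one hpos]
      obtain ⟨s, hs, his⟩ := exists_mis_mem G i
      have hle : π i ≤ ∑ k ∈ s, π k :=
        Finset.single_le_sum (fun k _ => hnn k) his
      have := hc_lb s hs
      linarith
  · intro s hs
    rw [← Finset.sum_div, div_le_one hpos]
    have := hc_lb s hs
    linarith
end

section
/- Let π : V → ℝ satisfy π_i ≥ 0 for every vertex i and z(π) > 0, and let c = c*(π) be the minimum reduced cost with respect to π. Then for every dual-feasible π̂ that maximizes the dual objective among dual-feasible vectors, the Lagrangian bound L(π) = z(π)/(1−c) satisfies L(π) ≤ z(π̂); that is, the Lagrangian bound is a valid lower bound on the optimal objective value of the dual problem. -/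
variable {V : Type*}

/-- The Lagrangian bound `L(π) = z(π)/(1-c)`, where `c = c*(π)` is the minimum
reduced cost, is a valid lower bound on the optimal objective value of the dual
problem. -/
theorem lagrangian_bound_valid [Fintype V]
    (G : SimpleGraph V) (π : V → ℝ)
    (hnn : ∀ i, 0 ≤ π i)
    (hzpos : 0 < ∑ i, π i)
    (c : ℝ)
    (hc_lb : ∀ s : Finset V, IsMIS G s → c ≤ 1 - ∑ i ∈ s, π i)
    (hc_attained : ∃ s : Finset V, IsMIS G s ∧ c = 1 - ∑ i ∈ s, π i) :
    ∀ πhat : V → ℝ, DualFeasible G πhat →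
      (∀ σ : V → ℝ, DualFeasible G σ → ∑ i, σ i ≤ ∑ i, πhat i) →
      (∑ i, π i) / (1 - c) ≤ ∑ i, πhat i := by
  classical
  intro πhat hfeas hopt
  -- the zero vector is dual feasible, so the optimum is nonnegative
  have hzero : DualFeasible G (fun _ => (0:ℝ)) :=
    ⟨fun i => ⟨le_refl _, zero_le_one⟩, fun s _ => by simp⟩
  have hhat0 : (0:ℝ) ≤ ∑ i, πhat i := by
    have := hopt (fun _ => 0) hzero
    simpa using this
  obtain ⟨s₀, hs₀, hc_eq⟩ := hc_attained
  have h1c : 0 ≤ 1 - c := by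
    have : (0:ℝ) ≤ ∑ i ∈ s₀, π i := Finset.sum_nonneg fun i _ => hnn i
    linarith [this, hc_eq]
  rcases eq_or_lt_of_le h1c with h | h
  · rw [← h, div_zero]; exact hhat0
  · -- every vertex lies in some MIS
    have exMIS : ∀ i : V, ∃ s : Finset V, IsMIS G s ∧ i ∈ s := by
      intro i
      have hne : (Finset.univ.filter
          (fun t : Finset V => IsIndepSet' G t ∧ i ∈ t)).Nonempty := by
        refine ⟨{i}, ?_⟩
        simp only [Finset.mem_filter, Finset.mem_univ, true_and, Finset.mem_singleton]
        refine ⟨?_, trivial⟩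
        intro a ha b hb
        simp only [Finset.mem_singleton] at ha hb
        subst ha; subst hb; exact G.irrefl
      obtain ⟨s, hs, hmax⟩ := Finset.exists_max_image _ Finset.card hne
      simp only [Finset.mem_filter, Finset.mem_univ, true_and] at hs
      refine ⟨s, ⟨hs.1, fun t ht hst => ?_⟩, hs.2⟩
      have htmem : t ∈ Finset.univ.filter
          (fun t : Finset V => IsIndepSet' G t ∧ i ∈ t) := by
        simp only [Finset.mem_filter, Finset.mem_univ, true_and]
        exact ⟨ht, hst hs.2⟩
      exact Finset.eq_of_subset_of_card_le hst (hmax t htmem)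
    -- sums over MIS's are bounded by 1 - c
    have hsum_le : ∀ s : Finset V, IsMIS G s → ∑ i ∈ s, π i ≤ 1 - c := by
      intro s hs; linarith [hc_lb s hs]
    -- π/(1-c) is dual feasible
    have hσ : DualFeasible G (fun i => π i / (1 - c)) := by
      constructor
      · intro i
        refine ⟨div_nonneg (hnn i) h1c, ?_⟩
        rw [div_le_one h]
        obtain ⟨s, hs, hi⟩ := exMIS i
        calc π i ≤ ∑ j ∈ s, π j := Finset.single_le_sum (fun j _ => hnn j) hi
          _ ≤ 1 - c := hsum_le s hs
      · intro s hs
        rw [← Finset.sum_div, div_le_one h]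
        exact hsum_le s hs
    have := hopt _ hσ
    rwa [← Finset.sum_div] at this
end
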